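/- Let (V, g) be an n-dimensional scalar product space with orthonormal basis (e₁, …, e_n) and causal character signs ε_i = g(e_i, e_i), let C be an algebraic curvature tensor on V with curvature operator Ĉ, and let Ω^{ij} ∈ ∧²V* be the 2-forms with Ω^{ij} = −Ω^{ji} determined by Ĉ(ξ) = Σ_{i,j∈[n]} Ω^{ij}(ξ) e_i ∧ e_j. Then for all 1 ≤ k ≤ ⌊n/2⌋, the kth Pontryagin form of C satisfies ϖ_k(C) = (1/(π^{2k}·(2k)!)) Σ_{I,J ∈ [n]^{2k}} ε_I · sgn(I;J) · Ω^{i₁j₁} ∧ ⋯ ∧ Ω^{i_{2k}j_{2k}}. -/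

import Mathlib

open ExteriorAlgebra

variable {V : Type} [AddCommGroup V] [Module ℝ V]

/-- The canonical `k`-fold wedge `v₁ ∧ ⋯ ∧ v_k` as an element of the `k`-th exterior power. -/
noncomputable def iMultiP (k : ℕ) (v : Fin k → V) : ⋀[ℝ]^k V :=
  ⟨ExteriorAlgebra.ιMulti ℝ k v, ExteriorAlgebra.ιMulti_range ℝ k (Set.mem_range_self v)⟩

/-- `IsStarMul k l A B AB` says `AB = A * B` per Bivens' definition. -/
def IsStarMul (k l : ℕ) (A : Module.End ℝ (⋀[ℝ]^k V)) (B : Module.End ℝ (⋀[ℝ]^l V))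
    (AB : Module.End ℝ (⋀[ℝ]^(k+l) V)) : Prop :=
  ∀ x : Fin (k + l) → V,
    (AB (iMultiP (k+l) x) : ExteriorAlgebra ℝ V)
      = ((k.factorial * l.factorial : ℕ) : ℝ)⁻¹ •
        ∑ σ : Equiv.Perm (Fin (k + l)), ((Equiv.Perm.sign σ : ℤ) : ℝ) •
          ((A (iMultiP k (fun i => x (σ (Fin.castAdd l i)))) : ExteriorAlgebra ℝ V) *
           (B (iMultiP l (fun j => x (σ (Fin.natAdd k j)))) : ExteriorAlgebra ℝ V))

noncomputable def altWedge {k l : ℕ} (α : V [⋀^Fin k]→ₗ[ℝ] ℝ) (β : V [⋀^Fin l]→ₗ[ℝ] ℝ) :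
    V [⋀^Fin (k + l)]→ₗ[ℝ] ℝ :=
  AlternatingMap.domDomCongr finSumFinEquiv
    ((TensorProduct.lid ℝ ℝ).toLinearMap.compAlternatingMap (α.domCoprod β))

noncomputable def altCast {a b : ℕ} (h : a = b) (ω : V [⋀^Fin a]→ₗ[ℝ] ℝ) :
    V [⋀^Fin b]→ₗ[ℝ] ℝ :=
  ω.domDomCongr (finCongr h)

noncomputable def wedgeList : (m : ℕ) → (Fin m → (V [⋀^Fin 2]→ₗ[ℝ] ℝ)) → (V [⋀^Fin (2*m)]→ₗ[ℝ] ℝ)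
  | 0, _ => altCast (by ring) (AlternatingMap.constOfIsEmpty ℝ V (Fin 0) 1)
  | (m+1), ω => altCast (by ring)
      (altWedge (wedgeList m (fun a => ω a.castSucc)) (ω (Fin.last m)))

noncomputable def sgnIJ {m n : ℕ} (I J : Fin m → Fin n) : ℝ :=
  if h : Function.Injective I ∧ ∃ τ : Equiv.Perm (Fin m), J = I ∘ τ then
    ((Equiv.Perm.sign h.2.choose : ℤ) : ℝ)
  else 0

noncomputable def epsI {m n : ℕ} (eps : Fin n → ℝ) (I : Fin m → Fin n) : ℝ :=
  if Function.Injective I then ∏ a, eps (I a) else 0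

noncomputable def pontryaginForm (n k : ℕ) (Ω : Fin n → Fin n → (V [⋀^Fin 2]→ₗ[ℝ] ℝ)) :
    V [⋀^Fin (4*k)]→ₗ[ℝ] ℝ :=
  (((2 * Real.pi) ^ (2*k))⁻¹ * (((2*k).factorial : ℕ) : ℝ)⁻¹) •
    ∑ I : Fin (2*k) → Fin n, ∑ J : Fin (2*k) → Fin n,
      sgnIJ I J • altCast (by ring) (wedgeList (2*k) (fun a => Ω (I a) (J a)))

def IsACT (C : V → V → V → V → ℝ) : Prop :=
  ((∀ (a : ℝ) (u u' v x y : V), C (a • u + u') v x y = a * C u v x y + C u' v x y) ∧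
   (∀ (a : ℝ) (u v v' x y : V), C u (a • v + v') x y = a * C u v x y + C u v' x y) ∧
   (∀ (a : ℝ) (u v x x' y : V), C u v (a • x + x') y = a * C u v x y + C u v x' y) ∧
   (∀ (a : ℝ) (u v x y y' : V), C u v x (a • y + y') = a * C u v x y + C u v x y')) ∧
  (∀ u v x y, C u v x y = -C v u x y) ∧
  (∀ u v x y, C u v x y = -C u v y x) ∧
  (∀ u v x y, C u v x y = C x y u v) ∧
  (∀ u v x y, C u v x y + C x u v y + C v x u y = 0)

def IsInducedForm (g : LinearMap.BilinForm ℝ V) (k : ℕ)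
    (B : LinearMap.BilinForm ℝ (⋀[ℝ]^k V)) : Prop :=
  ∀ v w : Fin k → V,
    B (iMultiP k v) (iMultiP k w) = Matrix.det (Matrix.of fun i j => g (v i) (w j))

def IsCurvOp (C : V → V → V → V → ℝ) (B2 : LinearMap.BilinForm ℝ (⋀[ℝ]^2 V))
    (Chat : Module.End ℝ (⋀[ℝ]^2 V)) : Prop :=
  ∀ u v x y : V, B2 (Chat (iMultiP 2 ![u, v])) (iMultiP 2 ![x, y]) = C u v x y

def IsCurvMatrix (g : LinearMap.BilinForm ℝ V) (C : V → V → V → V → ℝ) {n : ℕ}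
    (e : Fin n → V) (Ω : Fin n → Fin n → (V [⋀^Fin 2]→ₗ[ℝ] ℝ)) : Prop :=
  ∀ (x y : V) (i m : Fin n), C x y (e i) (e m) = ∑ j, Ω i j ![x, y] * g (e j) (e m)

def IsExtPowMap (k : ℕ) (θ : V →ₗ[ℝ] V) (T : Module.End ℝ (⋀[ℝ]^k V)) : Prop :=
  ∀ v : Fin k → V,
    (T (iMultiP k v) : ExteriorAlgebra ℝ V) = ExteriorAlgebra.ιMulti ℝ k (fun i => θ (v i))

noncomputable def Fform (m : ℕ) (Bm : LinearMap.BilinForm ℝ (⋀[ℝ]^m V))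
    (A B : Module.End ℝ (⋀[ℝ]^m V)) : (Fin (m + m) → V) → ℝ :=
  fun x => (((m.factorial : ℕ) : ℝ)^2)⁻¹ * ∑ σ : Equiv.Perm (Fin (m + m)),
    ((Equiv.Perm.sign σ : ℤ) : ℝ) *
      Bm (A (iMultiP m (fun i => x (σ (Fin.castAdd m i)))))
         (B (iMultiP m (fun i => x (σ (Fin.natAdd m i)))))

noncomputable def ricci {n : ℕ} (C : V → V → V → V → ℝ) (b d : Fin n → V) : V → V → ℝ :=
  fun x y => ∑ j, C (d j) x y (b j)

noncomputable def scalCurv {n : ℕ} (C : V → V → V → V → ℝ) (b d : Fin n → V) : ℝ :=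
  ∑ j, ricci C b d (d j) (b j)

noncomputable def schouten {n : ℕ} (g : LinearMap.BilinForm ℝ V) (C : V → V → V → V → ℝ)
    (b d : Fin n → V) : V → V → ℝ :=
  fun x y => (1/((n : ℝ) - 2)) *
    (ricci C b d x y - (scalCurv C b d / (2*((n : ℝ) - 1))) * g x y)

def kulkarniNomizu (h k : V → V → ℝ) : V → V → V → V → ℝ :=
  fun u v x y => h u y * k v x + h v x * k u y - h u x * k v y - h v y * k u x

noncomputable def weyl {n : ℕ} (g : LinearMap.BilinForm ℝ V) (C : V → V → V → V → ℝ)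
    (b d : Fin n → V) : V → V → V → V → ℝ :=
  fun u v x y => C u v x y -
    kulkarniNomizu (schouten g C b d) (fun a b' => g a b') u v x y

noncomputable def wedgeBig : (L : List ((d : ℕ) × (V [⋀^Fin d]→ₗ[ℝ] ℝ))) →
    V [⋀^Fin ((L.map Sigma.fst).sum)]→ₗ[ℝ] ℝ
  | [] => altCast (by simp) (AlternatingMap.constOfIsEmpty ℝ V (Fin 0) 1)
  | p :: L => altCast (by simp) (altWedge p.2 (wedgeBig L))


/-! In an orthonormal basis with signs `ε i = g (e i) (e i)`, the curvature matrix is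
`Ωmat i j = (2 * ε i) • Ω i j`: lowering an index costs a factor `ε`, and pairing `Ĉ (u ∧ v)` with
`e i ∧ e j` picks up both `Ω i j` and `-Ω j i`. By multilinearity of the wedge product each term of
the Pontryagin form then acquires the factor `2 ^ (2k) ∏ a, ε (I a)`, which equals `2 ^ (2k) ε_I`
wherever `sgn(I;J) ≠ 0`; the `2 ^ (2k)` cancels against `(2π) ^ (2k)`. -/

section Wedge

lemma altCast_smul (c : ℝ) {a b : ℕ} (h : a = b) (ω : V [⋀^Fin a]→ₗ[ℝ] ℝ) :
    altCast h (c • ω) = c • altCast h ω :=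
  AlternatingMap.domDomCongr_smul _ c ω

lemma altCast_apply {a b : ℕ} (h : a = b) (ω : V [⋀^Fin a]→ₗ[ℝ] ℝ) (x : Fin b → V) :
    altCast h ω x = ω (fun i => x (Fin.cast h i)) :=
  rfl

lemma AlternatingMap.sum_apply {ι : Type*} {k : ℕ} (s : Finset ι)
    (f : ι → V [⋀^Fin k]→ₗ[ℝ] ℝ) (v : Fin k → V) : (∑ i ∈ s, f i) v = ∑ i ∈ s, f i v :=
  map_sum (AddMonoidHom.mk' (fun f : V [⋀^Fin k]→ₗ[ℝ] ℝ => f v) fun _ _ => rfl) f s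

lemma altWedge_smul_left (c : ℝ) {k l : ℕ} (α : V [⋀^Fin k]→ₗ[ℝ] ℝ)
    (β : V [⋀^Fin l]→ₗ[ℝ] ℝ) : altWedge (c • α) β = c • altWedge α β := by
  have : (c • α).domCoprod β = c • α.domCoprod β := by
    simp only [← AlternatingMap.domCoprod'_apply, ← TensorProduct.smul_tmul', map_smul]
  ext v
  simp [altWedge, this]

lemma altWedge_smul_right (c : ℝ) {k l : ℕ} (α : V [⋀^Fin k]→ₗ[ℝ] ℝ)
    (β : V [⋀^Fin l]→ₗ[ℝ] ℝ) : altWedge α (c • β) = c • altWedge α β := by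
  have : α.domCoprod (c • β) = c • α.domCoprod β := by
    simp only [← AlternatingMap.domCoprod'_apply, TensorProduct.tmul_smul, map_smul]
  ext v
  simp [altWedge, this]

lemma wedgeList_smul : ∀ (m : ℕ) (c : Fin m → ℝ) (ω : Fin m → (V [⋀^Fin 2]→ₗ[ℝ] ℝ)),
    wedgeList m (fun a => c a • ω a) = (∏ a, c a) • wedgeList m ω
  | 0, c, ω => by simp [wedgeList]
  | m + 1, c, ω => by
    rw [wedgeList, wedgeList, wedgeList_smul m (fun a => c a.castSucc) (fun a => ω a.castSucc),
      altWedge_smul_left, altWedge_smul_right, altCast_smul, altCast_smul,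
      Fin.prod_univ_castSucc, mul_smul]

end Wedge

section Signs

variable {m n : ℕ}

lemma sgnIJ_eq_zero_of_not_injective {I : Fin m → Fin n} (hI : ¬Function.Injective I)
    (J : Fin m → Fin n) : sgnIJ I J = 0 :=
  dif_neg fun h => hI h.1

lemma sgnIJ_mul_prod (c : Fin n → ℝ) (I J : Fin m → Fin n) :
    sgnIJ I J * ∏ a, c (I a) = epsI c I * sgnIJ I J := by
  by_cases hI : Function.Injective I
  · rw [epsI, if_pos hI, mul_comm]
  · simp [sgnIJ_eq_zero_of_not_injective hI]

lemma epsI_const_mul (r : ℝ) (c : Fin n → ℝ) (I : Fin m → Fin n) :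
    epsI (fun i => r * c i) I = r ^ m * epsI c I := by
  unfold epsI
  split_ifs
  · simp [Finset.prod_mul_distrib]
  · simp

end Signs

section Curvature

variable {n : ℕ} {g : LinearMap.BilinForm ℝ V} {e : Fin n → V}

lemma bilin_apply_eq_ite_of_orthogonal (hortho : ∀ i j, i ≠ j → g (e i) (e j) = 0)
    (i j : Fin n) : g (e i) (e j) = if i = j then g (e j) (e j) else 0 := by
  split_ifs with h
  · rw [h]
  · exact hortho i j h

lemma IsInducedForm.apply_iMultiP_two {B : LinearMap.BilinForm ℝ (⋀[ℝ]^2 V)}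
    (hB : IsInducedForm g 2 B) (u v x y : V) :
    B (iMultiP 2 ![u, v]) (iMultiP 2 ![x, y]) = g u x * g v y - g u y * g v x := by
  rw [hB, Matrix.det_fin_two]
  simp

lemma IsCurvMatrix.apply_eq {C : V → V → V → V → ℝ}
    {Ωmat : Fin n → Fin n → (V [⋀^Fin 2]→ₗ[ℝ] ℝ)}
    (hΩmat : IsCurvMatrix g C e Ωmat) (hortho : ∀ i j, i ≠ j → g (e i) (e j) = 0)
    (hunit : ∀ i, g (e i) (e i) = 1 ∨ g (e i) (e i) = -1) (u v : V) (i m : Fin n) :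
    Ωmat i m ![u, v] = g (e m) (e m) * C u v (e i) (e m) := by
  have hsq : g (e m) (e m) * g (e m) (e m) = 1 := mul_self_eq_one_iff.mpr (hunit m)
  have hC : C u v (e i) (e m) = Ωmat i m ![u, v] * g (e m) (e m) := by
    rw [hΩmat u v i m, Finset.sum_eq_single m (fun j _ hj => by rw [hortho j m hj, mul_zero])
      (by simp)]
  rw [hC]
  linear_combination -(Ωmat i m ![u, v]) * hsq

lemma IsCurvOp.apply_eq_of_expansion {C : V → V → V → V → ℝ}
    {B2 : LinearMap.BilinForm ℝ (⋀[ℝ]^2 V)} {Chat : Module.End ℝ (⋀[ℝ]^2 V)}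
    {Ω : Fin n → Fin n → (V [⋀^Fin 2]→ₗ[ℝ] ℝ)}
    (hChat : IsCurvOp C B2 Chat) (hB2 : IsInducedForm g 2 B2)
    (hortho : ∀ i j, i ≠ j → g (e i) (e j) = 0) (hΩanti : ∀ i j, Ω i j = -Ω j i)
    (hΩ : ∀ u v : V, Chat (iMultiP 2 ![u, v])
      = ∑ i : Fin n, ∑ j : Fin n, Ω i j ![u, v] • iMultiP 2 ![e i, e j])
    (u v : V) (i m : Fin n) :
    C u v (e i) (e m) = 2 * (g (e i) (e i) * g (e m) (e m) * Ω i m ![u, v]) := by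
  set ε : Fin n → ℝ := fun i => g (e i) (e i)
  have hg : ∀ a b, g (e a) (e b) = if a = b then ε b else 0 :=
    bilin_apply_eq_ite_of_orthogonal hortho
  rw [← hChat, hΩ]
  simp only [map_sum, map_smul, LinearMap.sum_apply, LinearMap.smul_apply, smul_eq_mul,
    hB2.apply_iMultiP_two, hg]
  simp only [mul_sub, mul_ite, mul_zero, ite_mul, zero_mul, Finset.sum_sub_distrib,
    Finset.sum_ite_eq', Finset.mem_univ, if_true, hΩanti m i, AlternatingMap.neg_apply]
  ring

lemma IsCurvMatrix.eq_smul_of_expansion {C : V → V → V → V → ℝ}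
    {Ωmat : Fin n → Fin n → (V [⋀^Fin 2]→ₗ[ℝ] ℝ)} {B2 : LinearMap.BilinForm ℝ (⋀[ℝ]^2 V)}
    {Chat : Module.End ℝ (⋀[ℝ]^2 V)} {Ω : Fin n → Fin n → (V [⋀^Fin 2]→ₗ[ℝ] ℝ)}
    (hΩmat : IsCurvMatrix g C e Ωmat) (hChat : IsCurvOp C B2 Chat) (hB2 : IsInducedForm g 2 B2)
    (hortho : ∀ i j, i ≠ j → g (e i) (e j) = 0)
    (hunit : ∀ i, g (e i) (e i) = 1 ∨ g (e i) (e i) = -1) (hΩanti : ∀ i j, Ω i j = -Ω j i)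
    (hΩ : ∀ u v : V, Chat (iMultiP 2 ![u, v])
      = ∑ i : Fin n, ∑ j : Fin n, Ω i j ![u, v] • iMultiP 2 ![e i, e j])
    (i j : Fin n) : Ωmat i j = (2 * g (e i) (e i)) • Ω i j := by
  ext v
  have hsq : g (e j) (e j) * g (e j) (e j) = 1 := mul_self_eq_one_iff.mpr (hunit j)
  have hv : v = ![v 0, v 1] := (FinVec.etaExpand_eq v).symm
  rw [hv, hΩmat.apply_eq hortho hunit,
    hChat.apply_eq_of_expansion hB2 hortho hΩanti hΩ, AlternatingMap.smul_apply, smul_eq_mul]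
  linear_combination 2 * g (e i) (e i) * Ω i j ![v 0, v 1] * hsq

end Curvature

lemma pontryaginForm_apply_smul {n : ℕ} (k : ℕ) (c : Fin n → ℝ)
    (Ω : Fin n → Fin n → (V [⋀^Fin 2]→ₗ[ℝ] ℝ)) (x : Fin (4 * k) → V) :
    pontryaginForm n k (fun i j => c i • Ω i j) x
      = ((2 * Real.pi) ^ (2 * k))⁻¹ * (((2 * k).factorial : ℕ) : ℝ)⁻¹ *
          ∑ I : Fin (2 * k) → Fin n, ∑ J : Fin (2 * k) → Fin n,
            epsI c I * sgnIJ I J *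
              (wedgeList (2 * k) (fun a => Ω (I a) (J a)))
                (fun i => x (Fin.cast (by ring) i)) := by
  simp only [pontryaginForm, AlternatingMap.smul_apply, AlternatingMap.sum_apply, altCast_apply,
    wedgeList_smul, smul_eq_mul, ← mul_assoc, sgnIJ_mul_prod]

/-- With an orthonormal basis `e` and `Ĉ(ξ) = Σ Ω^{ij}(ξ) e_i ∧ e_j`,
the `k`-th Pontryagin form of `C` satisfies
`ϖ_k(C) = (1/(π^{2k}(2k)!)) Σ_{I,J} ε_I sgn(I;J) Ω^{i₁j₁} ∧ ⋯ ∧ Ω^{i_{2k}j_{2k}}`. -/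
theorem pontryaginForm_expansion_orthobasis
    {n : ℕ}
    (g : LinearMap.BilinForm ℝ V)
    (e : Module.Basis (Fin n) ℝ V)
    (hortho : ∀ i j, i ≠ j → g (e i) (e j) = 0)
    (hunit : ∀ i, g (e i) (e i) = 1 ∨ g (e i) (e i) = -1)
    (C : V → V → V → V → ℝ)
    -- the curvature matrix of `C` w.r.t. `e`, defining the Pontryagin form
    (Ωmat : Fin n → Fin n → (V [⋀^Fin 2]→ₗ[ℝ] ℝ))
    (hΩmat : IsCurvMatrix g C (fun i => e i) Ωmat)
    -- the antisymmetric 2-forms `Ω^{ij}` of the curvature operator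
    (B2 : LinearMap.BilinForm ℝ (⋀[ℝ]^2 V)) (hB2 : IsInducedForm g 2 B2)
    (Chat : Module.End ℝ (⋀[ℝ]^2 V)) (hChat : IsCurvOp C B2 Chat)
    (Ω : Fin n → Fin n → (V [⋀^Fin 2]→ₗ[ℝ] ℝ))
    (hΩanti : ∀ i j, Ω i j = -Ω j i)
    (hΩ : ∀ u v : V, Chat (iMultiP 2 ![u, v])
      = ∑ i : Fin n, ∑ j : Fin n, Ω i j ![u, v] • iMultiP 2 ![e i, e j])
    (k : ℕ) :
    ∀ x : Fin (4*k) → V,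
      pontryaginForm n k Ωmat x
        = (Real.pi ^ (2*k) * (((2*k).factorial : ℕ) : ℝ))⁻¹ *
            ∑ I : Fin (2*k) → Fin n, ∑ J : Fin (2*k) → Fin n,
              epsI (fun i => g (e i) (e i)) I * sgnIJ I J *
                (wedgeList (2*k) (fun a => Ω (I a) (J a)))
                  (fun i => x (Fin.cast (by ring) i)) := by
  intro x
  have hsmul : Ωmat = fun i j => (2 * g (e i) (e i)) • Ω i j := funext₂
    (hΩmat.eq_smul_of_expansion hChat hB2 hortho hunit hΩanti hΩ)
  rw [hsmul, pontryaginForm_apply_smul]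
  simp only [epsI_const_mul, mul_assoc, ← Finset.mul_sum]
  rw [mul_pow]
  field_simp
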